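/- Let Q be the quadratic form (x, y) ↦ x² + y² on ℝ². The submonoid of CliffordAlgebra Q generated by the set {ι(v) : v ∈ ℝ², Q(v) = 1} (products of unit vectors) is isomorphic, as a monoid, to the orthogonal group O(2) of real orthogonal 2×2 matrices. (This is the paper's claim that Pin⁺₂ ≅ O(2).) -/

import Mathlib

/-!
`x² + y²` is the form `Q 1 1` whose Clifford algebra is the split quaternion algebra
`ℍ[ℝ,1,0,1] ≅ M₂(ℝ)`; under this isomorphism a unit vector `(x, y)` becomes the reflection matrix
`[[x, y], [y, -x]]`. The map is injective, so the monoid generated by unit vectors is isomorphic to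
the monoid generated by the reflections, which is all of `O(2)`: an orthogonal matrix of
determinant `-1` is a reflection and one of determinant `1` is a product of two.
-/

open CliffordAlgebra

/-- The quadratic form `(x, y) ↦ x² + y²` on `ℝ²`. -/
noncomputable def euclidForm2 : QuadraticForm ℝ (ℝ × ℝ) :=
  (QuadraticMap.sq (R := ℝ) (A := ℝ)).prod (QuadraticMap.sq (R := ℝ) (A := ℝ))

namespace PinO2

open Matrix

lemma euclidForm2_apply (v : ℝ × ℝ) : euclidForm2 v = v.1 * v.1 + v.2 * v.2 := rfl

def reflection (v : ℝ × ℝ) : Matrix (Fin 2) (Fin 2) ℝ := !![v.1, v.2; v.2, -v.1]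

lemma reflection_mem_orthogonalGroup {v : ℝ × ℝ} (hv : euclidForm2 v = 1) :
    reflection v ∈ orthogonalGroup (Fin 2) ℝ := by
  rw [euclidForm2_apply] at hv
  rw [mem_orthogonalGroup_iff, ← ext_iff]
  intro i j
  fin_cases i <;> fin_cases j <;> simp [reflection, mul_apply, one_apply] <;> linarith

lemma eq_reflection_or_eq_reflection_mul_reflection {M : Matrix (Fin 2) (Fin 2) ℝ}
    (hM : M ∈ orthogonalGroup (Fin 2) ℝ) :
    ∃ v, euclidForm2 v = 1 ∧ (M = reflection v ∨ M = reflection (1, 0) * reflection v) := by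
  have hMM := (mem_orthogonalGroup_iff' (A := M)).mp hM
  have h00 := congrFun (congrFun hMM 0) 0
  have h01 := congrFun (congrFun hMM 0) 1
  have h11 := congrFun (congrFun hMM 1) 1
  simp only [mul_apply, transpose_apply, Fin.sum_univ_two, one_apply_eq, ne_eq, zero_ne_one,
    not_false_eq_true, one_apply_ne] at h00 h01 h11
  rw [eta_fin_two M]
  obtain hdet | hdet : M 0 0 * M 1 1 - M 0 1 * M 1 0 = 1 ∨ M 0 0 * M 1 1 - M 0 1 * M 1 0 = -1 :=
    mul_self_eq_one_iff.mp (by nlinarith)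
  · have h1 : M 0 1 = -M 1 0 := by nlinarith [sq_nonneg (M 0 1 + M 1 0), sq_nonneg (M 1 1 - M 0 0)]
    have h2 : M 1 1 = M 0 0 := by nlinarith [sq_nonneg (M 0 1 + M 1 0), sq_nonneg (M 1 1 - M 0 0)]
    refine ⟨(M 0 0, -M 1 0), by rw [euclidForm2_apply]; linarith, Or.inr ?_⟩
    rw [h1, h2, reflection, reflection, mul_fin_two]
    simp
  · have h1 : M 0 1 = M 1 0 := by nlinarith [sq_nonneg (M 0 1 - M 1 0), sq_nonneg (M 1 1 + M 0 0)]
    have h2 : M 1 1 = -M 0 0 := by nlinarith [sq_nonneg (M 0 1 - M 1 0), sq_nonneg (M 1 1 + M 0 0)]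
    exact ⟨(M 0 0, M 1 0), by rw [euclidForm2_apply]; linarith, Or.inl (by rw [h1, h2, reflection])⟩

lemma closure_reflection_eq_orthogonalGroup :
    Submonoid.closure (reflection '' {v | euclidForm2 v = 1}) = orthogonalGroup (Fin 2) ℝ := by
  apply le_antisymm
  · rw [Submonoid.closure_le]
    rintro _ ⟨v, hv, rfl⟩
    exact reflection_mem_orthogonalGroup hv
  · intro M hM
    have mem {v} (hv : euclidForm2 v = 1) :
        reflection v ∈ Submonoid.closure (reflection '' {v | euclidForm2 v = 1}) :=
      Submonoid.subset_closure ⟨v, hv, rfl⟩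
    obtain ⟨v, hv, rfl | rfl⟩ := eq_reflection_or_eq_reflection_mul_reflection hM
    · exact mem hv
    · exact mul_mem (mem (by rw [euclidForm2_apply]; norm_num)) (mem hv)

def matrixBasis : QuaternionAlgebra.Basis (Matrix (Fin 2) (Fin 2) ℝ) (1 : ℝ) 0 1 where
  i := !![1, 0; 0, -1]
  j := !![0, 1; 1, 0]
  k := !![0, 1; -1, 0]
  i_mul_i := by simp [one_fin_two]
  j_mul_j := by simp [one_fin_two]
  i_mul_j := by simp
  j_mul_i := by simp

lemma matrixBasis_lift (q : QuaternionAlgebra ℝ 1 0 1) :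
    matrixBasis.lift q = !![q.re + q.imI, q.imJ + q.imK; q.imJ - q.imK, q.re - q.imI] := by
  ext i j
  fin_cases i <;> fin_cases j <;>
    simp [QuaternionAlgebra.Basis.lift, matrixBasis, Algebra.algebraMap_eq_smul_one] <;> ring

lemma matrixBasis_liftHom_injective : Function.Injective matrixBasis.liftHom := by
  intro p q hpq
  have h : matrixBasis.lift p = matrixBasis.lift q := hpq
  rw [matrixBasis_lift, matrixBasis_lift] at h
  have h00 := congrFun (congrFun h 0) 0
  have h01 := congrFun (congrFun h 0) 1
  have h10 := congrFun (congrFun h 1) 0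
  have h11 := congrFun (congrFun h 1) 1
  simp only [of_apply, cons_val', cons_val_zero, cons_val_fin_one, cons_val_one] at h00 h01 h10 h11
  ext <;> linarith

def euclidForm2EquivQ : euclidForm2.IsometryEquiv (CliffordAlgebraQuaternion.Q (1 : ℝ) 1) where
  toLinearEquiv := LinearEquiv.refl ℝ (ℝ × ℝ)
  map_app' v := by simp [euclidForm2_apply]

noncomputable def toMatrix : CliffordAlgebra euclidForm2 →ₐ[ℝ] Matrix (Fin 2) (Fin 2) ℝ :=
  matrixBasis.liftHom.comp <|
    ((equivOfIsometry euclidForm2EquivQ).trans CliffordAlgebraQuaternion.equiv).toAlgHom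

lemma toMatrix_ι (v : ℝ × ℝ) : toMatrix (ι euclidForm2 v) = reflection v := by
  simp only [toMatrix, AlgHom.comp_apply, AlgEquiv.coe_toAlgHom, AlgEquiv.trans_apply,
    equivOfIsometry_apply, map_apply_ι]
  change matrixBasis.lift (CliffordAlgebraQuaternion.toQuaternion (ι _ v)) = reflection v
  rw [CliffordAlgebraQuaternion.toQuaternion_ι, matrixBasis_lift, reflection]
  simp

lemma toMatrix_injective : Function.Injective toMatrix :=
  matrixBasis_liftHom_injective.comp (AlgEquiv.injective _)

end PinO2

/-- For the quadratic form `Q(x, y) = x² + y²` on `ℝ²`, the submonoid of the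
Clifford algebra of `Q` generated by `{ι v : Q v = 1}` (products of unit vectors) is
isomorphic, as a monoid, to the orthogonal group `O(2)` of real orthogonal `2 × 2` matrices;
this is the claim `Pin⁺₂ ≅ O(2)`. -/
theorem pinPlus_two_iso_O2 :
    Nonempty
      ((Submonoid.closure
          {x : CliffordAlgebra euclidForm2 |
            ∃ v : ℝ × ℝ, euclidForm2 v = 1 ∧ ι euclidForm2 v = x}) ≃*
        Matrix.orthogonalGroup (Fin 2) ℝ) := by
  set S := Submonoid.closure (ι euclidForm2 '' {v | euclidForm2 v = 1})
  have hS : S.map PinO2.toMatrix.toMonoidHom = Matrix.orthogonalGroup (Fin 2) ℝ := by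
    rw [MonoidHom.map_mclosure, Set.image_image]
    simpa [PinO2.toMatrix_ι] using PinO2.closure_reflection_eq_orthogonalGroup
  exact ⟨(S.equivMapOfInjective _ PinO2.toMatrix_injective).trans (MulEquiv.submonoidCongr hS)⟩
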